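/- Let K be a field, G the group of f ∈ K⟨⟨e_0,e_1⟩⟩ with f[∅]=1 under the Ihara product g ∘ f = g · f(e_0, g^{-1}e_1 g), and let Ad_f(e_1) = f^{-1} e_1 f. Then the map f ↦ Ad_f(e_1) satisfies Ad_{g ∘ f}(e_1) = Ad_g(e_1) ∘_Ad Ad_f(e_1), where (x ∘_Ad y) = y(e_0, x); i.e., Ad(e_1) is a homomorphism from (G, ∘) to the substitution monoid (series with zero constant term, ∘_Ad, unit e_1). -/

import Mathlib

open Finset

abbrev Word := List (Fin 2)

variable {K : Type*} [Field K]

/-- Multiplication via deconcatenation: `(f·g)[w] = ∑_{w = uv} f[u]·g[v]`. -/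
def seriesMul (f g : Word → K) : Word → K :=
  fun w => ∑ k ∈ Finset.range (w.length + 1), f (w.take k) * g (w.drop k)

/-- The unit series `1`. -/
def seriesOne : Word → K := fun w => if w = [] then 1 else 0

/-- The series `e₁`. -/
def e1Series : Word → K := fun w => if w = [1] then 1 else 0

/-- The multiplicative inverse of a series with constant coefficient `1`. -/
def seriesInv (f : Word → K) : Word → K
  | [] => 1
  | x :: w => -∑ k ∈ Finset.range (w.length + 1), f (x :: w.take k) * seriesInv f (w.drop k)
  termination_by w => w.length
  decreasing_by simp [List.length_drop] <;> omega

/-- Coefficient of the word `w` in the image of the monomial `u` under the continuous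
algebra substitution `e₀ ↦ e₀`, `e₁ ↦ h`. -/
def substCoeff (h : Word → K) : Word → Word → K
  | [], w => if w = [] then 1 else 0
  | a :: u, w =>
    if a = 0 then
      match w with
      | [] => 0
      | b :: w' => if b = 0 then substCoeff h u w' else 0
    else
      ∑ k ∈ Finset.range (w.length + 1), h (w.take k) * substCoeff h u (w.drop k)

/-- The substitution `f(e₀, h)`: substitute `e₀ ↦ e₀`, `e₁ ↦ h` in `f`
(for `h` with zero constant coefficient). -/
def subst (f h : Word → K) : Word → K :=
  fun w => ∑ k ∈ Finset.range (w.length + 1),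
    ∑ u : Fin k → Fin 2, f (List.ofFn u) * substCoeff h (List.ofFn u) w

/-- `Ad_g(e₁) = g⁻¹ e₁ g`. -/
def adE1 (g : Word → K) : Word → K :=
  seriesMul (seriesMul (seriesInv g) e1Series) g

/-- The Ihara (twisted Magnus) product `g ∘ f = g · f(e₀, g⁻¹ e₁ g)`. -/
def ihara (g f : Word → K) : Word → K :=
  seriesMul g (subst f (adE1 g))

/-!
For `h = Ad_g(e₁)`, which has no constant term, the substitution `φ = subst · h` is multiplicative
and unital (on coefficients: `substCoeff h (u ++ v)` is the series product of `substCoeff h u` and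
`substCoeff h v`), hence commutes with inverses, and `φ(e₁) = h`. Since `g ∘ f = g · φ(f)`,
`Ad_{g ∘ f}(e₁) = φ(f)⁻¹ g⁻¹ e₁ g φ(f) = φ(f⁻¹) φ(e₁) φ(f) = φ(Ad_f(e₁))`.
-/

section Deconcatenation

variable {α M : Type*} [AddCommMonoid M]

def deconcatSum (w : List α) (F : List α → List α → M) : M :=
  ∑ k ∈ range (w.length + 1), F (w.take k) (w.drop k)

theorem deconcatSum_nil (F : List α → List α → M) : deconcatSum [] F = F [] [] := by
  simp [deconcatSum]

theorem deconcatSum_cons (x : α) (w : List α) (F : List α → List α → M) :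
    deconcatSum (x :: w) F = F [] (x :: w) + deconcatSum w fun u v => F (x :: u) v := by
  rw [deconcatSum, List.length_cons, sum_range_succ', add_comm]
  rfl

theorem deconcatSum_congr {w : List α} {F G : List α → List α → M}
    (h : ∀ u v, u ++ v = w → F u v = G u v) : deconcatSum w F = deconcatSum w G :=
  sum_congr rfl fun k _ => h _ _ (List.take_append_drop k w)

theorem deconcatSum_eq_zero {w : List α} {F : List α → List α → M}
    (h : ∀ u v, u ++ v = w → F u v = 0) : deconcatSum w F = 0 :=
  (deconcatSum_congr h).trans sum_const_zero

theorem deconcatSum_eq_left {w : List α} {F : List α → List α → M}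
    (hF : ∀ u v, u ≠ [] → F u v = 0) : deconcatSum w F = F [] w := by
  cases w with
  | nil => exact deconcatSum_nil F
  | cons x w =>
    rw [deconcatSum_cons, deconcatSum, sum_eq_zero fun k _ => hF _ _ (List.cons_ne_nil _ _), add_zero]

theorem deconcatSum_eq_right {w : List α} {F : List α → List α → M}
    (hF : ∀ u v, v ≠ [] → F u v = 0) : deconcatSum w F = F w [] := by
  rw [deconcatSum, sum_range_succ, List.take_length, List.drop_length, sum_eq_zero, zero_add]
  refine fun k hk => hF _ _ ?_
  rw [ne_eq, List.drop_eq_nil_iff, not_le]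
  exact mem_range.mp hk

theorem deconcatSum_sum {ι : Type*} (s : Finset ι) (w : List α) (F : ι → List α → List α → M) :
    deconcatSum w (fun u v => ∑ i ∈ s, F i u v) = ∑ i ∈ s, deconcatSum w (F i) :=
  sum_comm

/-- Both sides sum `F a b c` over the factorizations `w = a ++ b ++ c`. -/
theorem deconcatSum_assoc (w : List α) (F : List α → List α → List α → M) :
    deconcatSum w (fun u c => deconcatSum u fun a b => F a b c)
      = deconcatSum w (fun a v => deconcatSum v fun b c => F a b c) := by
  simp only [deconcatSum, sum_sigma']
  refine sum_nbij' (fun p => ⟨p.2, p.1 - p.2⟩) (fun q => ⟨q.1 + q.2, q.1⟩) ?_ ?_ ?_ ?_ ?_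
  · rintro ⟨i, j⟩ h
    simp only [mem_sigma, mem_range, List.length_take, List.length_drop] at h ⊢
    omega
  · rintro ⟨j, m⟩ h
    simp only [mem_sigma, mem_range, List.length_take, List.length_drop] at h ⊢
    omega
  · rintro ⟨i, j⟩ h
    simp only [mem_sigma, mem_range, List.length_take] at h
    simp only [Sigma.mk.injEq, heq_eq_eq, and_true]
    omega
  · rintro ⟨j, m⟩ -
    simp
  · rintro ⟨i, j⟩ h
    simp only [mem_sigma, mem_range, List.length_take] at h
    have hji : j ≤ i := by omega
    rw [List.take_take, min_eq_left hji, List.drop_take, List.drop_drop, Nat.add_sub_cancel' hji]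

theorem deconcatSum_mul {R : Type*} [NonUnitalNonAssocSemiring R] (w : List α)
    (F : List α → List α → R) (c : R) :
    deconcatSum w F * c = deconcatSum w fun u v => F u v * c :=
  sum_mul _ _ _

theorem mul_deconcatSum {R : Type*} [NonUnitalNonAssocSemiring R] (w : List α)
    (F : List α → List α → R) (c : R) :
    c * deconcatSum w F = deconcatSum w fun u v => c * F u v :=
  mul_sum _ _ _

end Deconcatenation

section Series

theorem seriesMul_apply (f g : Word → K) (w : Word) :
    seriesMul f g w = deconcatSum w fun u v => f u * g v :=
  rfl

@[simp]
theorem seriesMul_apply_nil (f g : Word → K) : seriesMul f g [] = f [] * g [] :=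
  deconcatSum_nil fun u v => f u * g v

theorem seriesMul_assoc (f g h : Word → K) :
    seriesMul (seriesMul f g) h = seriesMul f (seriesMul g h) := by
  funext w
  simp only [seriesMul_apply, deconcatSum_mul, mul_deconcatSum, mul_assoc]
  exact deconcatSum_assoc w fun a b c => f a * (g b * h c)

theorem seriesOne_seriesMul (f : Word → K) : seriesMul seriesOne f = f := by
  funext w
  rw [seriesMul_apply, deconcatSum_eq_left fun u v hu => by simp [seriesOne, hu]]
  simp [seriesOne]

theorem seriesMul_seriesOne (f : Word → K) : seriesMul f seriesOne = f := by
  funext w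
  rw [seriesMul_apply, deconcatSum_eq_right fun u v hv => by simp [seriesOne, hv]]
  simp [seriesOne]

theorem seriesInv_apply_nil (f : Word → K) : seriesInv f [] = 1 := by
  rw [seriesInv]

theorem seriesInv_apply_cons (f : Word → K) (x : Fin 2) (w : Word) :
    seriesInv f (x :: w) = -deconcatSum w fun u v => f (x :: u) * seriesInv f v := by
  rw [seriesInv]
  rfl

theorem seriesMul_seriesInv_cancel {f : Word → K} (hf : f [] = 1) :
    seriesMul f (seriesInv f) = seriesOne := by
  funext w
  cases w with
  | nil => simp [seriesOne, seriesInv_apply_nil, hf]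
  | cons x w =>
    rw [seriesMul_apply, deconcatSum_cons, hf, one_mul, seriesInv_apply_cons]
    simp [seriesOne]

/-- `seriesInv (seriesInv f)` is a right inverse of `seriesInv f`, hence equal to `f`. -/
theorem seriesInv_seriesMul_cancel {f : Word → K} (hf : f [] = 1) :
    seriesMul (seriesInv f) f = seriesOne := by
  have hinv := seriesMul_seriesInv_cancel (seriesInv_apply_nil f)
  have hff : seriesInv (seriesInv f) = f := by
    calc seriesInv (seriesInv f)
        = seriesMul (seriesMul f (seriesInv f)) (seriesInv (seriesInv f)) := by
          rw [seriesMul_seriesInv_cancel hf, seriesOne_seriesMul]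
      _ = f := by rw [seriesMul_assoc, hinv, seriesMul_seriesOne]
  rwa [hff] at hinv

theorem seriesInv_eq_of_seriesMul_eq_seriesOne {f g : Word → K} (hf : f [] = 1)
    (h : seriesMul g f = seriesOne) : seriesInv f = g := by
  calc seriesInv f = seriesMul (seriesMul g f) (seriesInv f) := by rw [h, seriesOne_seriesMul]
    _ = g := by rw [seriesMul_assoc, seriesMul_seriesInv_cancel hf, seriesMul_seriesOne]

theorem seriesInv_seriesMul_rev {f g : Word → K} (hf : f [] = 1) (hg : g [] = 1) :
    seriesInv (seriesMul f g) = seriesMul (seriesInv g) (seriesInv f) := by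
  refine seriesInv_eq_of_seriesMul_eq_seriesOne (by simp [hf, hg]) ?_
  rw [seriesMul_assoc, ← seriesMul_assoc (seriesInv f), seriesInv_seriesMul_cancel hf,
    seriesOne_seriesMul, seriesInv_seriesMul_cancel hg]

end Series

section Words

variable (α : Type*) [Fintype α] [DecidableEq α]

def wordsUpTo (n : ℕ) : Finset (List α) :=
  (range (n + 1)).biUnion fun k => univ.image (List.ofFn : (Fin k → α) → List α)

variable {α}

@[simp]
theorem mem_wordsUpTo {n : ℕ} {u : List α} : u ∈ wordsUpTo α n ↔ u.length ≤ n := by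
  simp only [wordsUpTo, mem_biUnion, mem_range, mem_image, mem_univ, true_and]
  constructor
  · rintro ⟨k, hk, v, rfl⟩
    rw [List.length_ofFn]
    omega
  · intro hu
    exact ⟨u.length, by omega, u.get, List.ofFn_get u⟩

theorem sum_wordsUpTo {M : Type*} [AddCommMonoid M] (n : ℕ) (F : List α → M) :
    ∑ u ∈ wordsUpTo α n, F u = ∑ k ∈ range (n + 1), ∑ v : Fin k → α, F (List.ofFn v) := by
  rw [wordsUpTo, sum_biUnion]
  · exact sum_congr rfl fun k _ => sum_image fun v _ v' _ h => List.ofFn_injective h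
  · intro k _ l _ hkl
    simp only [Function.onFun, disjoint_left, mem_image]
    rintro _ ⟨v, -, rfl⟩ ⟨v', -, h⟩
    exact hkl (by simpa using congrArg List.length h.symm)

/-- Splitting words of length `≤ n` into two pieces gives all pairs of words with total length
`≤ n`, each exactly once. -/
theorem sum_wordsUpTo_deconcatSum {M : Type*} [AddCommMonoid M] (n : ℕ)
    (F : List α → List α → M) (hF : ∀ u v, n < u.length + v.length → F u v = 0) :
    ∑ w ∈ wordsUpTo α n, deconcatSum w F = ∑ u ∈ wordsUpTo α n, ∑ v ∈ wordsUpTo α n, F u v := by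
  rw [← sum_product']
  simp only [deconcatSum, sum_sigma']
  refine sum_bij_ne_zero (fun p _ _ => (p.1.take p.2, p.1.drop p.2)) ?_ ?_ ?_ (fun _ _ _ => rfl)
  · rintro ⟨w, k⟩ h -
    simp only [mem_sigma, mem_wordsUpTo] at h
    simp only [mem_product, mem_wordsUpTo, List.length_take, List.length_drop]
    omega
  · rintro ⟨w, k⟩ h - ⟨w', k'⟩ h' - heq
    simp only [mem_sigma, mem_range] at h h'
    simp only [Prod.mk.injEq] at heq
    obtain rfl : w = w' := by
      rw [← List.take_append_drop k w, ← List.take_append_drop k' w', heq.1, heq.2]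
    obtain rfl : k = k' := by
      have hlen := congrArg List.length heq.1
      simp only [List.length_take] at hlen
      omega
    rfl
  · rintro ⟨u, v⟩ - huv
    refine ⟨⟨u ++ v, u.length⟩, ?_, ?_, ?_⟩
    · by_contra hn
      exact huv (hF u v (by simpa [mem_wordsUpTo] using hn))
    · simpa using huv
    · simp

end Words

section SubstCoeff

variable (h : Word → K)

theorem substCoeff_nil_left (w : Word) : substCoeff h [] w = if w = [] then 1 else 0 :=
  rfl

theorem substCoeff_zero_cons_nil (u : Word) : substCoeff h (0 :: u) [] = 0 :=
  rfl

theorem substCoeff_zero_cons_cons (u w : Word) (b : Fin 2) :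
    substCoeff h (0 :: u) (b :: w) = if b = 0 then substCoeff h u w else 0 :=
  rfl

theorem substCoeff_one_cons (u w : Word) :
    substCoeff h (1 :: u) w = deconcatSum w fun v v' => h v * substCoeff h u v' := by
  rw [substCoeff.eq_def]
  rfl

theorem substCoeff_singleton_one (w : Word) : substCoeff h [1] w = h w := by
  rw [substCoeff_one_cons, deconcatSum_eq_right fun v v' hv' => by simp [substCoeff_nil_left, hv']]
  simp [substCoeff_nil_left]

theorem substCoeff_append (u v w : Word) :
    substCoeff h (u ++ v) w = deconcatSum w fun x y => substCoeff h u x * substCoeff h v y := by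
  induction u generalizing w with
  | nil =>
    rw [deconcatSum_eq_left fun x y hx => by simp [substCoeff_nil_left, hx]]
    simp [substCoeff_nil_left]
  | cons a u ih =>
    obtain rfl | rfl : a = 0 ∨ a = 1 := by omega
    · cases w with
      | nil => simp [deconcatSum_nil, substCoeff_zero_cons_nil]
      | cons b w =>
        simp only [List.cons_append, substCoeff_zero_cons_cons, deconcatSum_cons,
          substCoeff_zero_cons_nil, zero_mul, zero_add]
        split_ifs
        · exact ih w
        · exact (deconcatSum_eq_zero fun _ _ _ => zero_mul _).symm
    · simp only [List.cons_append, substCoeff_one_cons, ih, mul_deconcatSum, deconcatSum_mul,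
        mul_assoc]
      exact (deconcatSum_assoc w fun x y z => h x * (substCoeff h u y * substCoeff h v z)).symm

variable {h}

theorem substCoeff_eq_zero_of_length_lt (h0 : h [] = 0) {u w : Word}
    (hlen : w.length < u.length) : substCoeff h u w = 0 := by
  induction u generalizing w with
  | nil => simp at hlen
  | cons a u ih =>
    obtain rfl | rfl : a = 0 ∨ a = 1 := by omega
    · cases w with
      | nil => rfl
      | cons b w =>
        rw [substCoeff_zero_cons_cons, ite_eq_right_iff]
        exact fun _ => ih (by simpa using hlen)
    · rw [substCoeff_one_cons]
      refine deconcatSum_eq_zero fun x y hxy => ?_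
      cases x with
      | nil => rw [h0, zero_mul]
      | cons c x =>
        rw [ih, mul_zero]
        have hw := congrArg List.length hxy
        simp only [List.cons_append, List.length_cons, List.length_append] at hw hlen
        omega

end SubstCoeff

section Substitution

variable {h : Word → K}

theorem subst_eq_sum (f : Word → K) (w : Word) :
    subst f h w = ∑ u ∈ wordsUpTo (Fin 2) w.length, f u * substCoeff h u w :=
  (sum_wordsUpTo w.length fun u => f u * substCoeff h u w).symm

theorem subst_eq_sum_of_length_le (h0 : h [] = 0) (f : Word → K) {w : Word} {n : ℕ}
    (hn : w.length ≤ n) :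
    subst f h w = ∑ u ∈ wordsUpTo (Fin 2) n, f u * substCoeff h u w := by
  rw [subst_eq_sum]
  refine sum_subset (fun u hu => ?_) fun u _ hu => ?_
  · rw [mem_wordsUpTo] at hu ⊢
    omega
  · rw [substCoeff_eq_zero_of_length_lt h0 (by simpa using hu), mul_zero]

@[simp]
theorem subst_apply_nil (f : Word → K) : subst f h [] = f [] := by
  simp [subst, substCoeff_nil_left]

theorem subst_seriesOne : subst seriesOne h = seriesOne := by
  funext w
  rw [subst_eq_sum, sum_eq_single []]
  · simp [seriesOne, substCoeff_nil_left]
  · intro u _ hu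
    simp [seriesOne, hu]
  · simp

theorem subst_e1Series (h0 : h [] = 0) : subst e1Series h = h := by
  funext w
  rw [subst_eq_sum, sum_eq_single [1]]
  · simp [e1Series, substCoeff_singleton_one]
  · intro u _ hu
    simp [e1Series, hu]
  · intro h1
    obtain rfl : w = [] := by simpa using h1
    rw [substCoeff_singleton_one, h0, mul_zero]

theorem subst_seriesMul (h0 : h [] = 0) (a b : Word → K) :
    subst (seriesMul a b) h = seriesMul (subst a h) (subst b h) := by
  funext w
  set S := wordsUpTo (Fin 2) w.length
  have expand_lhs (u : Word) : seriesMul a b u * substCoeff h u w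
      = deconcatSum u fun u₁ u₂ => a u₁ * b u₂ * substCoeff h (u₁ ++ u₂) w := by
    rw [seriesMul_apply, deconcatSum_mul]
    exact deconcatSum_congr fun u₁ u₂ hu => by rw [hu]
  have expand_rhs : seriesMul (subst a h) (subst b h) w = deconcatSum w fun x y =>
      ∑ u₁ ∈ S, ∑ u₂ ∈ S, a u₁ * b u₂ * (substCoeff h u₁ x * substCoeff h u₂ y) := by
    rw [seriesMul_apply]
    refine deconcatSum_congr fun x y hxy => ?_
    have hlen := congrArg List.length hxy
    rw [List.length_append] at hlen
    rw [subst_eq_sum_of_length_le h0 a (n := w.length) (by omega),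
      subst_eq_sum_of_length_le h0 b (n := w.length) (by omega), sum_mul_sum]
    exact sum_congr rfl fun _ _ => sum_congr rfl fun _ _ => by ring
  calc subst (seriesMul a b) h w
      = ∑ u ∈ S, deconcatSum u fun u₁ u₂ => a u₁ * b u₂ * substCoeff h (u₁ ++ u₂) w := by
        rw [subst_eq_sum]
        exact sum_congr rfl fun u _ => expand_lhs u
    _ = ∑ u₁ ∈ S, ∑ u₂ ∈ S, a u₁ * b u₂ * substCoeff h (u₁ ++ u₂) w :=
        sum_wordsUpTo_deconcatSum _ _ fun u₁ u₂ hlen => by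
          rw [substCoeff_eq_zero_of_length_lt h0 (by simpa using hlen), mul_zero]
    _ = seriesMul (subst a h) (subst b h) w := by
        simp only [expand_rhs, deconcatSum_sum, substCoeff_append, mul_deconcatSum]

theorem subst_seriesInv (h0 : h [] = 0) {f : Word → K} (hf : f [] = 1) :
    subst (seriesInv f) h = seriesInv (subst f h) := by
  refine (seriesInv_eq_of_seriesMul_eq_seriesOne (by rw [subst_apply_nil, hf]) ?_).symm
  rw [← subst_seriesMul h0, seriesInv_seriesMul_cancel hf, subst_seriesOne]

end Substitution

theorem adE1_apply_nil (g : Word → K) : adE1 g [] = 0 := by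
  simp [adE1, e1Series]

/-- The map `f ↦ Ad_f(e₁) = f⁻¹ e₁ f` intertwines the Ihara product with the substitution
product `x ∘_Ad y = y(e₀, x)`: for `f, g` with constant coefficient `1`,
`Ad_{g ∘ f}(e₁) = Ad_g(e₁) ∘_Ad Ad_f(e₁)`. -/
theorem adE1_hom {K : Type*} [Field K] (f g : Word → K) (hf : f [] = 1) (hg : g [] = 1) :
    adE1 (ihara g f) = subst (adE1 f) (adE1 g) := by
  have hAd : adE1 g [] = 0 := adE1_apply_nil g
  have hφf : subst f (adE1 g) [] = 1 := by rw [subst_apply_nil, hf]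
  rw [adE1.eq_1 (ihara g f), ihara, seriesInv_seriesMul_rev hg hφf, ← subst_seriesInv hAd hf]
  rw [adE1.eq_1 f, subst_seriesMul hAd, subst_seriesMul hAd, subst_e1Series hAd, adE1]
  simp only [seriesMul_assoc]
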